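/- Let G be a triconnected graph, let C be a simple cycle of G whose vertex set separates G \ C into two parts A and B (no edge of G joins A to B), and let H be any connected component of A. Then the graph G/H obtained from G by contracting H into a single vertex is triconnected. -/

import Mathlib

/-! Preamble: finite multigraphs, connectivity, closed walks, contractions,
planar embeddings, levels, double layers, slices, branch decompositions. -/

structure Multigraph : Type 1 where
  V : Type
  E : Type
  fintypeV : Fintype V
  fintypeE : Fintype E
  decEqV : DecidableEq V
  decEqE : DecidableEq E
  ends : E → Sym2 V

attribute [instance] Multigraph.fintypeV Multigraph.fintypeE
attribute [instance] Multigraph.decEqV Multigraph.decEqE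

namespace Multigraph

variable (G : Multigraph)

/-- Reachability inside the vertex set `A`, using only edges in `S`. -/
def Reach (A : Set G.V) (S : Set G.E) : G.V → G.V → Prop :=
  Relation.ReflTransGen (fun a b => a ∈ A ∧ b ∈ A ∧ ∃ e ∈ S, G.ends e = s(a, b))

/-- The subgraph with vertex set `A` and the edges of `S` (restricted to `A`)
is connected. -/
def ConnectedOn (A : Set G.V) (S : Set G.E) : Prop :=
  ∀ u ∈ A, ∀ v ∈ A, G.Reach A S u v

def Connected : Prop := G.ConnectedOn Set.univ Set.univ

/-- `G` remains connected after deleting any `k - 1` edges. -/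
def EdgeConn (k : ℕ) : Prop :=
  ∀ F : Finset G.E, F.card < k → G.ConnectedOn Set.univ (↑F)ᶜ

/-- `G` remains connected after deleting any `k - 1` vertices. -/
def VertexConn (k : ℕ) : Prop :=
  ∀ W : Finset G.V, W.card < k → G.ConnectedOn (↑W)ᶜ Set.univ

/-- The spanning subgraph of `G` with edge set `S` is `k`-edge connected. -/
def EdgeConnSub (S : Set G.E) (k : ℕ) : Prop :=
  ∀ F : Finset G.E, F.card < k → G.ConnectedOn Set.univ (S \ ↑F)

/-- The spanning subgraph of `G` with edge set `S` is `k`-vertex connected. -/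
def VertexConnSub (S : Set G.E) (k : ℕ) : Prop :=
  ∀ W : Finset G.V, W.card < k → G.ConnectedOn (↑W)ᶜ S

def Loopless : Prop := ∀ e : G.E, ¬ (G.ends e).IsDiag

def Simple : Prop := G.Loopless ∧ ∀ e e' : G.E, G.ends e = G.ends e' → e = e'

/-- At most `m` parallel edges between any pair of vertices. -/
def ParallelBound (m : ℕ) : Prop := ∀ p : Sym2 G.V, {e : G.E | G.ends e = p}.ncard ≤ m

def AdjV (u v : G.V) : Prop := ∃ e : G.E, G.ends e = s(u, v)

/-- `H` is a connected component of the subgraph induced by `A`. -/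
def IsCompOf (A H : Set G.V) : Prop :=
  ∃ u ∈ A, H = {v | v ∈ A ∧ G.Reach A Set.univ u v}

end Multigraph

/-! ### Closed walks, circuits and simple cycles -/

structure ClosedWalk (G : Multigraph) where
  n : ℕ
  npos : 0 < n
  vert : ℕ → G.V
  edge : ℕ → G.E
  ends_eq : ∀ i < n, G.ends (edge i) = s(vert i, vert (i + 1))
  closed : vert n = vert 0

namespace ClosedWalk

variable {G : Multigraph} (C : ClosedWalk G)

def edgeSet : Set G.E := {e | ∃ i < C.n, C.edge i = e}

def vertexSet : Set G.V := {v | ∃ i < C.n, C.vert i = v}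

/-- A circuit: a closed walk with no repeated edge. -/
def IsCircuit : Prop := ∀ i < C.n, ∀ j < C.n, C.edge i = C.edge j → i = j

/-- A simple cycle: a circuit with no repeated vertex. -/
def IsSimpleCycle : Prop :=
  C.IsCircuit ∧ ∀ i < C.n, ∀ j < C.n, C.vert i = C.vert j → i = j

end ClosedWalk

namespace Multigraph

variable (G : Multigraph)

/-- `C` is a maximal circuit among the circuits with all edges in `S`. -/
def IsMaxCircuitIn (S : Set G.E) (C : ClosedWalk G) : Prop :=
  C.IsCircuit ∧ C.edgeSet ⊆ S ∧
    ∀ C' : ClosedWalk G, C'.IsCircuit → C'.edgeSet ⊆ S →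
      C.edgeSet ⊆ C'.edgeSet → C'.edgeSet ⊆ C.edgeSet

/-- `C` is a simple cycle all of whose edges lie in `S`. -/
def IsSimpleCycleIn (S : Set G.E) (C : ClosedWalk G) : Prop :=
  C.IsSimpleCycle ∧ C.edgeSet ⊆ S

/-! ### Contractions -/

/-- Identify all vertices in `S` to a single vertex. -/
def contractSetoid (S : Set G.V) : Setoid G.V where
  r a b := a = b ∨ (a ∈ S ∧ b ∈ S)
  iseqv := by
    refine ⟨fun x => Or.inl rfl, ?_, ?_⟩
    · rintro x y (rfl | ⟨hx, hy⟩)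
      · exact Or.inl rfl
      · exact Or.inr ⟨hy, hx⟩
    · rintro x y z (rfl | ⟨hx, hy⟩) h
      · exact h
      · rcases h with rfl | ⟨hy', hz⟩
        · exact Or.inr ⟨hx, hy⟩
        · exact Or.inr ⟨hx, hz⟩

/-- The graph obtained from `G` by contracting the vertex set `S` to one
vertex, deleting the resulting self-loops. -/
noncomputable def contractSet (S : Set G.V) : Multigraph where
  V := Quotient (G.contractSetoid S)
  E := {e : G.E // ¬ (Sym2.map (Quotient.mk (G.contractSetoid S)) (G.ends e)).IsDiag}
  fintypeV := Fintype.ofFinite _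
  fintypeE := Fintype.ofFinite _
  decEqV := Classical.decEq _
  decEqE := Classical.decEq _
  ends := fun e => Sym2.map (Quotient.mk (G.contractSetoid S)) (G.ends e.1)

end Multigraph

namespace Multigraph

variable (G : Multigraph)

/-- Identify the vertices of each connected component of `G ∖ U`. -/
def outsideSetoid (U : Set G.V) : Setoid G.V where
  r a b := a = b ∨ (a ∉ U ∧ b ∉ U ∧ G.Reach Uᶜ Set.univ a b)
  iseqv := by
    refine ⟨fun x => Or.inl rfl, ?_, ?_⟩
    · rintro x y (rfl | ⟨hx, hy, hr⟩)
      · exact Or.inl rfl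
      · refine Or.inr ⟨hy, hx, ?_⟩
        refine (@Relation.ReflTransGen.stdSymm _ _ ⟨?_⟩).symm _ _ hr
        rintro a b ⟨ha, hb, e, he, hse⟩
        exact ⟨hb, ha, e, he, by rw [hse, Sym2.eq_swap]⟩
    · rintro x y z (rfl | ⟨hx, hy, hxy⟩) h
      · exact h
      · rcases h with rfl | ⟨hy', hz, hyz⟩
        · exact Or.inr ⟨hx, hy, hxy⟩
        · exact Or.inr ⟨hx, hz, hxy.trans hyz⟩

/-- The graph obtained from `G` by contracting each connected component of
`G ∖ U` to a single node, deleting the resulting self-loops. -/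
noncomputable def contractOutside (U : Set G.V) : Multigraph where
  V := Quotient (G.outsideSetoid U)
  E := {e : G.E // ¬ (Sym2.map (Quotient.mk (G.outsideSetoid U)) (G.ends e)).IsDiag}
  fintypeV := Fintype.ofFinite _
  fintypeE := Fintype.ofFinite _
  decEqV := Classical.decEq _
  decEqE := Classical.decEq _
  ends := fun e => Sym2.map (Quotient.mk (G.outsideSetoid U)) (G.ends e.1)

/-- An (arbitrary, fixed) numbering of the edges of `G`. -/
noncomputable def edgeIdx (e : G.E) : ℕ := ((Fintype.equivFin G.E) e : ℕ)

/-- Delete parallel edges so that at most `m` parallel edges remain between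
any pair of vertices (keeping, in each parallel class, the `m` edges of
smallest index). -/
noncomputable def trim (m : ℕ) : Multigraph where
  V := G.V
  E := {e : G.E // {e' : G.E | G.ends e' = G.ends e ∧ G.edgeIdx e' < G.edgeIdx e}.ncard < m}
  fintypeV := G.fintypeV
  fintypeE := Fintype.ofFinite _
  decEqV := G.decEqV
  decEqE := Classical.decEq _
  ends := fun e => G.ends e.1

end Multigraph

/-! ### Planar embeddings, levels and slices -/

/-- A planar embedding of the multigraph `G`: vertices are points of the
plane and edges are arcs joining thir endpoints, arcs being internally
disjoint from each other and from the vertices. -/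
structure Multigraph.PlanarEmb (G : Multigraph) where
  vpos : G.V → ℝ × ℝ
  arc : G.E → ℝ → ℝ × ℝ
  vpos_inj : Function.Injective vpos
  arc_cont : ∀ e, ContinuousOn (arc e) (Set.Icc 0 1)
  arc_ends : ∀ e, Sym2.map vpos (G.ends e) = s(arc e 0, arc e 1)
  arc_inj : ∀ e, ∀ t ∈ Set.Ioo (0:ℝ) 1, ∀ u ∈ Set.Icc (0:ℝ) 1, arc e t = arc e u → t = u
  arc_avoid_vert : ∀ e, ∀ t ∈ Set.Ioo (0:ℝ) 1, arc e t ∉ Set.range vpos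
  arcs_disj : ∀ e e', e ≠ e' → ∀ t ∈ Set.Ioo (0:ℝ) 1, ∀ u ∈ Set.Icc (0:ℝ) 1,
    arc e t ≠ arc e' u

/-- `G` is planar: it admits a planar embedding. -/
def Multigraph.Planar (G : Multigraph) : Prop := Nonempty G.PlanarEmb

/-- A Jordan curve `J` (together with the closed disk it bounds) encloses the
point `p`. -/
def JordanEncloses (J : Set (ℝ × ℝ)) (p : ℝ × ℝ) : Prop :=
  p ∈ J ∨ (p ∉ J ∧ Bornology.IsBounded (connectedComponentIn Jᶜ p))

namespace Multigraph.PlanarEmb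

variable {G : Multigraph} (emb : G.PlanarEmb)

/-- The image in the plane of the subgraph of `G` induced by `A`. -/
def image (A : Set G.V) : Set (ℝ × ℝ) :=
  emb.vpos '' A ∪ ⋃ e ∈ {e : G.E | ∀ v ∈ G.ends e, v ∈ A}, emb.arc e '' Set.Icc 0 1

/-- `p` is a point of the outer (infinite) face of the subgraph of `G`
induced by `A`. -/
def OuterPt (A : Set G.V) (p : ℝ × ℝ) : Prop :=
  p ∉ emb.image A ∧ ¬ Bornology.IsBounded (connectedComponentIn (emb.image A)ᶜ p)

/-- The vertex `v ∈ A` lies on the outer face of the subgraph of `G` induced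
by `A`. -/
def OnOuter (A : Set G.V) (v : G.V) : Prop :=
  v ∈ A ∧ emb.vpos v ∈ closure {p | emb.OuterPt A p}

/-- `V_i`: the set of vertices of level `i`; a vertex has level `i` if it lies
on the outer face after all vertices of smaller levels have been deleted. -/
def levelSet : ℕ → Set G.V
  | i => {v | emb.OnOuter {w | ∀ j, j < i → w ∉ levelSet j} v}
  termination_by i => i
  decreasing_by assumption

/-- The edges of `∂(G[A])`: edges of the subgraph induced by `A` lying on its
outer boundary. -/
def boundarySet (A : Set G.V) : Set G.E :=
  {e | (∀ v ∈ G.ends e, v ∈ A) ∧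
    emb.arc e '' Set.Icc 0 1 ⊆ closure {p | emb.OuterPt A p}}

/-- The curve in the plane traced by a closed walk. -/
def curveOf (C : ClosedWalk G) : Set (ℝ × ℝ) :=
  {p | ∃ i < C.n, p ∈ emb.arc (C.edge i) '' Set.Icc 0 1}

/-- A closed walk encloses the point `p` if some simple cycle contained in it
does. -/
def EnclosesPt (C : ClosedWalk G) (p : ℝ × ℝ) : Prop :=
  ∃ C' : ClosedWalk G, C'.IsSimpleCycle ∧ C'.edgeSet ⊆ C.edgeSet ∧
    JordanEncloses (emb.curveOf C') p

def EnclosesV (C : ClosedWalk G) (v : G.V) : Prop := emb.EnclosesPt C (emb.vpos v)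

end Multigraph.PlanarEmb

/-- `f(i) = max (i·k − k + t) 0`. -/
def fIdx (k t i : ℕ) : ℕ := i * k + t - k

namespace Multigraph.PlanarEmb

variable {G : Multigraph} (emb : G.PlanarEmb)

/-- The set of edges with one endpoint of level `a` and the other of level `b`. -/
def ebtw (a b : ℕ) : Set G.E :=
  {e | ∃ u v, G.ends e = s(u, v) ∧ u ∈ emb.levelSet a ∧ v ∈ emb.levelSet b}

/-- The `i`-th double layer `D_i = E_{i−1,i} ∪ E_i ∪ E_{i,i+1} ∪ E_{i+1}`. -/
def dlayer (i : ℕ) : Set G.E :=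
  emb.ebtw (i - 1) i ∪ emb.ebtw i i ∪ emb.ebtw i (i + 1) ∪ emb.ebtw (i + 1) (i + 1)

/-- `R_j = ⋃_{i ≡ j mod k} D_i`. -/
def rset (k j : ℕ) : Set G.E := ⋃ i ∈ {i : ℕ | i % k = j}, emb.dlayer i

/-- The edge set of `H_i`: the subgraph induced by the vertices of levels
`f(i)−1` through `f(i+1)+1`, minus the edges of `E_{f(i)−1}`. -/
def hiEdges (k t i : ℕ) : Set G.E :=
  {e | ∀ v ∈ G.ends e, ∃ j : ℕ, (fIdx k t i : ℤ) - 1 ≤ (j : ℤ) ∧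
      (j : ℤ) ≤ (fIdx k t (i + 1) : ℤ) + 1 ∧ v ∈ emb.levelSet j} \
  {e | ∀ v ∈ G.ends e, ∃ j : ℕ, (j : ℤ) = (fIdx k t i : ℤ) - 1 ∧ v ∈ emb.levelSet j}

/-- The vertices of `H_i` outside `V_{f(i)−1} ∪ V_{f(i+1)+1}` enclosed by the
circuit `Ca`. -/
def sliceU (k t i : ℕ) (Ca : ClosedWalk G) : Set G.V :=
  {v | (∃ j, fIdx k t i ≤ j ∧ j ≤ fIdx k t (i + 1) ∧ v ∈ emb.levelSet j) ∧
    emb.EnclosesV Ca v}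

/-- The 3EC slice `H_i^a`: contract every connected component of `G ∖ U` and
keep at most 3 parallel edges between any pair of vertices. -/
noncomputable def slice3EC (k t i : ℕ) (Ca : ClosedWalk G) : Multigraph :=
  (G.contractOutside (emb.sliceU k t i Ca)).trim 3

/-- The 3VC slice `H_i^a`: contract every connected component of `G ∖ U` and
delete all parallel edges. -/
noncomputable def slice3VC (k t i : ℕ) (Ca : ClosedWalk G) : Multigraph :=
  (G.contractOutside (emb.sliceU k t i Ca)).trim 1

/-- The edge of `G` underlying an edge of a 3EC slice. -/
noncomputable def sliceEdge3EC (k t i : ℕ) (Ca : ClosedWalk G) :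
    (emb.slice3EC k t i Ca).E → G.E := fun e => e.1.1

/-- The edge of `G` underlying an edge of a 3VC slice. -/
noncomputable def sliceEdge3VC (k t i : ℕ) (Ca : ClosedWalk G) :
    (emb.slice3VC k t i Ca).E → G.E := fun e => e.1.1

end Multigraph.PlanarEmb

/-! ### Branch decompositions and branchwidth -/

inductive BTree (α : Type) : Type
  | leaf : α → BTree α
  | node : BTree α → BTree α → BTree α

namespace BTree

variable {α : Type}

def leaves : BTree α → List α
  | .leaf a => [a]
  | .node l r => l.leaves ++ r.leaves

def subtrees : BTree α → List (BTree α)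
  | .leaf a => [.leaf a]
  | .node l r => .node l r :: (l.subtrees ++ r.subtrees)

end BTree

/-- The size of the separator associated with the edge bipartition
`(E₁, E(G) ∖ E₁)`: the number of vertices incident to edges of both parts. -/
noncomputable def Multigraph.sepSize (G : Multigraph) (E₁ : Set G.E) : ℕ :=
  {v : G.V | (∃ e ∈ E₁, v ∈ G.ends e) ∧ ∃ e ∉ E₁, v ∈ G.ends e}.ncard

/-- `G` has branchwidth at most `w`: some branch decomposition (a binary tree
whose leaves are in bijection with `E(G)`) has all its separators of size at
most `w`. -/
noncomputable def Multigraph.BranchWidthLE (G : Multigraph) (w : ℕ) : Prop :=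
  IsEmpty G.E ∨ ∃ T : BTree G.E, T.leaves.Nodup ∧ (∀ e : G.E, e ∈ T.leaves) ∧
    ∀ S ∈ T.subtrees, G.sepSize {e | e ∈ S.leaves} ≤ w

/-!
Delete a set `W` of at most two vertices from `G/H`. If the contracted vertex survives, `W`
lifts to at most two vertices of `G`, and paths of `G - W` project to paths of `G/H - W`.
Otherwise `W` consists of the contracted vertex and at most one more vertex `w`. Take a path
of `G - w`: whenever it enters `H` it must leave again through a neighbour of `H`, and these
all lie on `C` because `C` separates `A` from `B`. Since `C - w` is a path avoiding `H`, each
excursion into `H` can be replaced by a walk along `C`, giving a path of `G - (H ∪ {w})`.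
-/

namespace Multigraph

variable {G : Multigraph}

theorem Reach.symm {T : Set G.V} {S : Set G.E} {a b : G.V} (h : G.Reach T S a b) :
    G.Reach T S b a := by
  refine (@Relation.ReflTransGen.stdSymm _ _ ⟨?_⟩).symm _ _ h
  rintro x y ⟨hx, hy, e, he, hxy⟩
  exact ⟨hy, hx, e, he, hxy.trans Sym2.eq_swap⟩

theorem Reach.mono {T T' : Set G.V} {S : Set G.E} {a b : G.V} (hT : T ⊆ T')
    (h : G.Reach T S a b) : G.Reach T' S a b :=
  Relation.ReflTransGen.mono (fun _ _ ⟨hx, hy, hxy⟩ => ⟨hT hx, hT hy, hxy⟩) _ _ h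

theorem Reach.diff_of_neighbors_subset {X H S : Set G.V} {u v : G.V}
    (hHS : ∀ e z x, z ∈ H → x ∉ H → G.ends e = s(z, x) → x ∈ S)
    (hS : ∀ x ∈ S ∩ X, ∀ y ∈ S ∩ X, G.Reach (X \ H) Set.univ x y)
    (h : G.Reach X Set.univ u v) (hu : u ∉ H) (hv : v ∉ H) :
    G.Reach (X \ H) Set.univ u v := by
  suffices ∀ y, G.Reach X Set.univ u y → (y ∉ H → G.Reach (X \ H) Set.univ u y) ∧
      (y ∈ H → ∃ c ∈ S ∩ X, G.Reach (X \ H) Set.univ u c) from (this v h).1 hv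
  intro y hy
  induction hy with
  | refl => exact ⟨fun _ => .refl, fun huH => absurd huH hu⟩
  | @tail b c _ hbc ih =>
    obtain ⟨hbX, hcX, e, -, he⟩ := hbc
    by_cases hbH : b ∈ H <;> constructor <;> intro hcH
    · obtain ⟨d, hd, hud⟩ := ih.2 hbH
      exact hud.trans (hS d hd c ⟨hHS e b c hbH hcH he, hcX⟩)
    · exact ih.2 hbH
    · exact (ih.1 hbH).tail ⟨⟨hbX, hbH⟩, ⟨hcX, hcH⟩, e, trivial, he⟩
    · exact ⟨b, ⟨hHS e c b hcH hbH (he.trans Sym2.eq_swap), hbX⟩, ih.1 hbH⟩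

theorem IsCompOf.subset {A H : Set G.V} (hH : G.IsCompOf A H) : H ⊆ A := by
  obtain ⟨_, _, rfl⟩ := hH
  exact fun _ hz => hz.1

theorem IsCompOf.nonempty {A H : Set G.V} (hH : G.IsCompOf A H) : H.Nonempty := by
  obtain ⟨u, hu, rfl⟩ := hH
  exact ⟨u, hu, .refl⟩

theorem IsCompOf.mem_of_adj {A H : Set G.V} (hH : G.IsCompOf A H) {e : G.E} {z x : G.V}
    (hz : z ∈ H) (hx : x ∈ A) (he : G.ends e = s(z, x)) : x ∈ H := by
  obtain ⟨_, _, rfl⟩ := hH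
  exact ⟨hx, hz.2.tail ⟨hz.1, hx, e, trivial, he⟩⟩

theorem IsCompOf.notMem_of_union_eq_compl {A B S H : Set G.V} (hH : G.IsCompOf A H)
    (hAB : A ∪ B = Sᶜ) {z : G.V} (hz : z ∈ H) : z ∉ S :=
  (hAB ▸ Or.inl (hH.subset hz) : z ∈ Sᶜ)

theorem IsCompOf.neighbor_mem {A B S H : Set G.V} (hH : G.IsCompOf A H) (hAB : A ∪ B = Sᶜ)
    (hsep : ∀ (e : G.E), ∀ a ∈ A, ∀ b ∈ B, G.ends e ≠ s(a, b)) (e : G.E) (z x : G.V)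
    (hz : z ∈ H) (hx : x ∉ H) (he : G.ends e = s(z, x)) : x ∈ S := by
  by_contra hxS
  rcases (hAB ▸ hxS : x ∈ A ∪ B) with hxA | hxB
  · exact hx (hH.mem_of_adj hz hxA he)
  · exact hsep e z (hH.subset hz) x hxB he

abbrev contractVert (H : Set G.V) : G.V → (G.contractSet H).V :=
  Quotient.mk (G.contractSetoid H)

theorem contractVert_eq_of_mem {H : Set G.V} {a b : G.V} (ha : a ∈ H) (hb : b ∈ H) :
    G.contractVert H a = G.contractVert H b :=
  Quotient.sound (Or.inr ⟨ha, hb⟩)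

theorem contractVert_out {H : Set G.V} (c : (G.contractSet H).V) :
    G.contractVert H (Quotient.out c) = c :=
  Quotient.out_eq c

theorem eq_of_contractVert_eq {H : Set G.V} {a b : G.V}
    (h : G.contractVert H a = G.contractVert H b) (hb : b ∉ H) : a = b :=
  (Quotient.exact h).resolve_right fun hab => hb hab.2

theorem preimage_contractVert_eq_image_out {H : Set G.V} {h₀ : G.V} (hh₀ : h₀ ∈ H)
    {W : Finset (G.contractSet H).V} (hW : G.contractVert H h₀ ∉ W) :
    G.contractVert H ⁻¹' W = ↑(W.image Quotient.out) := by
  refine Set.ext fun z => ⟨fun hz => Finset.mem_image.2 ?_, fun hz => ?_⟩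
  · have hzH : z ∉ H := fun hzH => hW (contractVert_eq_of_mem hzH hh₀ ▸ hz)
    exact ⟨_, hz, eq_of_contractVert_eq (contractVert_out _) hzH⟩
  · obtain ⟨c, hc, rfl⟩ := Finset.mem_image.1 hz
    change Quotient.mk _ (Quotient.out c) ∈ W
    rwa [Quotient.out_eq]

theorem exists_preimage_contractVert_eq_insert {H : Set G.V} {h₀ : G.V} (hh₀ : h₀ ∈ H)
    {W : Finset (G.contractSet H).V} (hW : G.contractVert H h₀ ∈ W) (hcard : W.card ≤ 2) :
    ∃ w, G.contractVert H ⁻¹' W = insert w H := by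
  have hmkH : ∀ z ∈ H, G.contractVert H z ∈ W :=
    fun z hz => contractVert_eq_of_mem hz hh₀ ▸ hW
  have hmem_erase : ∀ z ∉ H, G.contractVert H z ∈ W →
      G.contractVert H z ∈ W.erase (G.contractVert H h₀) :=
    fun z hzH hz =>
      Finset.mem_erase.2 ⟨fun h => hzH (eq_of_contractVert_eq h.symm hzH ▸ hh₀), hz⟩
  rcases (W.erase (G.contractVert H h₀)).eq_empty_or_nonempty with hempty | ⟨c, hc⟩
  · refine ⟨h₀, ?_⟩
    rw [Set.insert_eq_of_mem hh₀]
    refine Set.ext fun z => ⟨fun hz => ?_, hmkH z⟩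
    by_contra hzH
    simpa [hempty] using hmem_erase z hzH hz
  · have hcard' : (W.erase (G.contractVert H h₀)).card ≤ 1 := by
      rw [Finset.card_erase_of_mem hW]
      omega
    refine ⟨c.out, Set.ext fun z => ⟨fun hz => ?_, ?_⟩⟩
    · by_cases hzH : z ∈ H
      · exact Or.inr hzH
      · refine Or.inl (eq_of_contractVert_eq ?_ hzH).symm
        rw [contractVert_out]
        exact Finset.card_le_one.1 hcard' _ hc _ (hmem_erase z hzH hz)
    · rintro (rfl | hzH)
      · rw [Set.mem_preimage, contractVert_out]
        exact Finset.mem_of_mem_erase hc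
      · exact hmkH z hzH

theorem Reach.map_contractVert {H : Set G.V} {T : Set (G.contractSet H).V} {a b : G.V}
    (h : G.Reach (G.contractVert H ⁻¹' T) Set.univ a b) :
    (G.contractSet H).Reach T Set.univ (G.contractVert H a) (G.contractVert H b) := by
  refine Relation.ReflTransGen.lift' _ ?_ _ _ h
  rintro x y ⟨hx, hy, e, -, he⟩
  change (G.contractSet H).Reach T Set.univ (G.contractVert H x) (G.contractVert H y)
  by_cases hxy : G.contractVert H x = G.contractVert H y
  · exact hxy ▸ .refl
  · have hloop : ¬ (Sym2.map (Quotient.mk (G.contractSetoid H)) (G.ends e)).IsDiag := by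
      rwa [he, Sym2.map_mk, Sym2.mk_isDiag_iff]
    refine Relation.ReflTransGen.single ⟨hx, hy, ⟨e, hloop⟩, trivial, ?_⟩
    change Sym2.map _ (G.ends e) = _
    rw [he, Sym2.map_mk]
    rfl

end Multigraph

namespace ClosedWalk

variable {G : Multigraph} (C : ClosedWalk G)

theorem vert_mem_vertexSet {m : ℕ} (hm : m ≤ C.n) : C.vert m ∈ C.vertexSet := by
  rcases hm.lt_or_eq with hm | rfl
  · exact ⟨m, hm, rfl⟩
  · exact ⟨0, C.npos, C.closed.symm⟩

theorem reach_vert {T : Set G.V} {a b : ℕ} (hab : a ≤ b) (hb : b ≤ C.n)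
    (hT : ∀ m, a ≤ m → m ≤ b → C.vert m ∈ T) :
    G.Reach T Set.univ (C.vert a) (C.vert b) := by
  induction b, hab using Nat.le_induction with
  | base => exact .refl
  | succ b hab ih =>
    exact (ih (by omega) fun m h₁ h₂ => hT m h₁ (by omega)).tail
      ⟨hT b hab (by omega), hT (b + 1) (by omega) le_rfl, C.edge b, trivial,
        C.ends_eq b (by omega)⟩

variable {C}

/-- If `w` sits strictly between the positions `i ≤ j`, go the other way round the cycle,
through `vert 0 = vert n`. -/
theorem IsSimpleCycle.reach_of_ne (hC : C.IsSimpleCycle) {T : Set G.V} {w x y : G.V}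
    (hT : ∀ z ∈ C.vertexSet, z ≠ w → z ∈ T) (hx : x ∈ C.vertexSet) (hy : y ∈ C.vertexSet)
    (hxw : x ≠ w) (hyw : y ≠ w) : G.Reach T Set.univ x y := by
  obtain ⟨i, hi, rfl⟩ := hx
  obtain ⟨j, hj, rfl⟩ := hy
  wlog hij : i ≤ j generalizing i j
  · exact (this j hj hyw i hi hxw (by omega)).symm
  have hTm : ∀ m ≤ C.n, C.vert m ≠ w → C.vert m ∈ T :=
    fun m hm hmw => hT _ (C.vert_mem_vertexSet hm) hmw
  by_cases hfree : ∀ m, i ≤ m → m ≤ j → C.vert m ≠ w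
  · exact C.reach_vert hij hj.le fun m him hmj => hTm m (by omega) (hfree m him hmj)
  push Not at hfree
  obtain ⟨k, hik, hkj, hk⟩ := hfree
  have hne : ∀ m < C.n, m ≠ k → C.vert m ≠ w :=
    fun m hm hmk hmw => hmk (hC.2 m hm k (by omega) (hmw.trans hk.symm))
  have hik' : i ≠ k := fun h => hxw (h ▸ hk)
  have hjk : j ≠ k := fun h => hyw (h ▸ hk)
  have hleft : G.Reach T Set.univ (C.vert 0) (C.vert i) :=
    C.reach_vert (Nat.zero_le i) hi.le fun m _ hmi =>
      hTm m (by omega) (hne m (by omega) (by omega))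
  have hright : G.Reach T Set.univ (C.vert j) (C.vert C.n) := by
    refine C.reach_vert hj.le le_rfl fun m hjm hmn => hTm m hmn ?_
    rcases hmn.lt_or_eq with hmn | rfl
    · exact hne m hmn (by omega)
    · exact C.closed ▸ hne 0 C.npos (by omega)
  rw [C.closed] at hright
  exact hleft.symm.trans hright.symm

end ClosedWalk

theorem contract_component_triconnected_general (G : Multigraph) (hG : G.VertexConn 3)
    (C : ClosedWalk G) (hC : C.IsSimpleCycle) (A B : Set G.V)
    (hAB : A ∪ B = (C.vertexSet)ᶜ)
    (hsep : ∀ (e : G.E), ∀ a ∈ A, ∀ b ∈ B, G.ends e ≠ s(a, b))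
    (H : Set G.V) (hH : G.IsCompOf A H) :
    (G.contractSet H).VertexConn 3 := by
  obtain ⟨h₀, hh₀⟩ := hH.nonempty
  intro W hW u' hu' v' hv'
  induction u' using Quotient.inductionOn with | h u => ?_
  induction v' using Quotient.inductionOn with | h v => ?_
  have hu : u ∈ (G.contractVert H ⁻¹' W)ᶜ := hu'
  have hv : v ∈ (G.contractVert H ⁻¹' W)ᶜ := hv'
  refine Multigraph.Reach.map_contractVert ?_
  rw [Set.preimage_compl]
  by_cases hW₀ : G.contractVert H h₀ ∈ W
  · obtain ⟨w, hpre⟩ := Multigraph.exists_preimage_contractVert_eq_insert hh₀ hW₀ (by omega)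
    rw [hpre] at hu hv ⊢
    simp only [Set.mem_compl_iff, Set.mem_insert_iff, not_or] at hu hv
    have hcyc : ∀ x ∈ C.vertexSet ∩ {w}ᶜ, ∀ y ∈ C.vertexSet ∩ {w}ᶜ,
        G.Reach ({w}ᶜ \ H) Set.univ x y := fun x hx y hy =>
      hC.reach_of_ne (fun z hz hzw => ⟨hzw, fun hzH => hH.notMem_of_union_eq_compl hAB hzH hz⟩)
        hx.1 hy.1 hx.2 hy.2
    have hGw : G.Reach {w}ᶜ Set.univ u v := by
      simpa using hG {w} (by simp) u (by simpa using hu.1) v (by simpa using hv.1)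
    refine (hGw.diff_of_neighbors_subset (hH.neighbor_mem hAB hsep) hcyc hu.2 hv.2).mono ?_
    rintro z ⟨hzw, hzH⟩ (rfl | hz)
    exacts [hzw rfl, hzH hz]
  · rw [Multigraph.preimage_contractVert_eq_image_out hh₀ hW₀] at hu hv ⊢
    exact hG _ (Finset.card_image_le.trans_lt hW) u hu v hv

/-- If `G` is triconnected, `C` is a simple cycle whose
vertex set separates `G ∖ C` into parts `A` and `B`, and `H` is a connected
component of `A`, then `G/H` is triconnected. -/
theorem contract_component_triconnected (G : Multigraph) (hG : G.VertexConn 3)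
    (C : ClosedWalk G) (hC : C.IsSimpleCycle) (A B : Set G.V)
    (hAB : A ∪ B = (C.vertexSet)ᶜ) (hdisj : Disjoint A B)
    (hsep : ∀ (e : G.E), ∀ a ∈ A, ∀ b ∈ B, G.ends e ≠ s(a, b))
    (H : Set G.V) (hH : G.IsCompOf A H) :
    (G.contractSet H).VertexConn 3 :=
  contract_component_triconnected_general G hG C hC A B hAB hsep H hH
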